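/- arXiv:math/0609515 — 2 statements merged into one kernel-verified Lean document; each statement's English description precedes it below -/
import Mathlib

section
/- Case (V), classification: Every irreducible case-V representation (V, ρ, X, Y) is isomorphic to L(η) for some character η of Γ with η|_Λ = ξ, where an isomorphism of representations is a linear isomorphism intertwining X, Y and every ρ(h). -/
noncomputable section

/-- `(V, ρ, X, Y)` is a representation of the common part of the rank-2 algebra `A(ξ)`:
`ρ` is a group homomorphism (recorded via multiplicativity and unitality),
`ρ(h)∘X = χ₁(h)·(X∘ρ(h))` and `ρ(h)∘Y = χ₂(h)·(Y∘ρ(h))` for all `h ∈ Γ`, and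
`ρ(g) = ξ(g)·id` for all `g ∈ Λ`. -/
def IsRep {Γ : Type*} [CommGroup Γ] (χ₁ χ₂ : Γ →* ℂˣ) (Λ : Subgroup Γ) (ξ : ↥Λ →* ℂˣ)
    {V : Type*} [AddCommGroup V] [Module ℂ V]
    (ρ : Γ → Module.End ℂ V) (X Y : Module.End ℂ V) : Prop :=
  (∀ a b : Γ, ρ (a * b) = ρ a * ρ b) ∧ ρ 1 = 1 ∧
  (∀ h : Γ, ρ h * X = (χ₁ h : ℂ) • (X * ρ h)) ∧
  (∀ h : Γ, ρ h * Y = (χ₂ h : ℂ) • (Y * ρ h)) ∧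
  ∀ g : Λ, ρ (g : Γ) = (ξ g : ℂ) • (1 : Module.End ℂ V)

/-- A subspace `W` is stable under `X`, `Y` and all `ρ(h)`. -/
def Stable2 {Γ : Type*} {V : Type*} [AddCommGroup V] [Module ℂ V]
    (ρ : Γ → Module.End ℂ V) (X Y : Module.End ℂ V) (W : Submodule ℂ V) : Prop :=
  (∀ v ∈ W, X v ∈ W) ∧ (∀ v ∈ W, Y v ∈ W) ∧ ∀ h : Γ, ∀ v ∈ W, ρ h v ∈ W

/-- Irreducibility: `V ≠ 0` and the only subspaces stable under `X`, `Y` and all `ρ(h)`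
are `0` and `V`. -/
def Irred2 {Γ : Type*} {V : Type*} [AddCommGroup V] [Module ℂ V]
    (ρ : Γ → Module.End ℂ V) (X Y : Module.End ℂ V) : Prop :=
  (∃ v : V, v ≠ 0) ∧ ∀ W : Submodule ℂ V, Stable2 ρ X Y W → W = ⊥ ∨ W = ⊤

/-- The sequence `c_i` defined by `c₀ = c` and
`c_i = q·(c_{i−1} + ν − ν·q^{2(i−1)}·γ)` for `i ≥ 1`. -/
def cseq (q ν γ c : ℂ) : ℕ → ℂ
  | 0 => c
  | i + 1 => q * (cseq q ν γ c i + ν - ν * q ^ (2 * i) * γ)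

/-- `(V, ρ, X, Y)` is a case-V representation: a representation with in addition
`X^r = id`, `Y^r = 0` and `X∘Y = q⁻¹·(Y∘X) + ρ(g₁g₂) − id`, where `q = χ₁(g₁)`. -/
def IsRepV {Γ : Type*} [CommGroup Γ] (g₁ g₂ : Γ) (χ₁ χ₂ : Γ →* ℂˣ)
    (Λ : Subgroup Γ) (ξ : ↥Λ →* ℂˣ) (r : ℕ)
    {V : Type*} [AddCommGroup V] [Module ℂ V]
    (ρ : Γ → Module.End ℂ V) (X Y : Module.End ℂ V) : Prop :=
  IsRep χ₁ χ₂ Λ ξ ρ X Y ∧ X ^ r = 1 ∧ Y ^ r = 0 ∧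
    X * Y = (((χ₁ g₁ : ℂˣ) : ℂ))⁻¹ • (Y * X) + ρ (g₁ * g₂) - 1

/-- The action of `h ∈ Γ` on `L(η)`, with `ρ(h)·f_i = η(h)·χ₁(h)^i·f_i` on the basis
`(f_i)_{i ∈ ℤ/rℤ}` of `ℤ/rℤ → ℂ`. -/
def wRho (r : ℕ) {Γ : Type*} [CommGroup Γ] (χ₁ η : Γ →* ℂˣ) (h : Γ) :
    Module.End ℂ (ZMod r → ℂ) where
  toFun v := fun i => (η h : ℂ) * (χ₁ h : ℂ) ^ i.val * v i
  map_add' v w := by funext i; simp [mul_add]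
  map_smul' a v := by funext i; simp [smul_eq_mul]; ring

/-- The operator `X` on `L(η)`, with `X·f_i = f_{i+1}` (indices modulo `r`). -/
def wX (r : ℕ) : Module.End ℂ (ZMod r → ℂ) where
  toFun v := fun i => v (i - 1)
  map_add' _ _ := rfl
  map_smul' _ _ := rfl

/-- The operator `Y` on `L(η)`, with `Y·f_i = c_i·f_{i−1}` (indices modulo `r`,
the index of `c` being read off via the canonical representative in `{0, …, r−1}`). -/
def wY (r : ℕ) (cs : ℕ → ℂ) : Module.End ℂ (ZMod r → ℂ) where
  toFun v := fun j => cs ((j + 1 : ZMod r).val) * v (j + 1)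
  map_add' v w := by funext j; simp [mul_add]
  map_smul' a v := by funext j; simp [smul_eq_mul]; ring

/-!
Since `Y` is nilpotent, its kernel is a nonzero subspace, stable under the commuting operators
`ρ(h)`; so it contains a common eigenvector `w`, whose eigenvalues form a character `η` of `Γ`
that agrees with `ξ` on `Λ`. The commutation rules make `Xⁱ w` an eigenvector of `ρ(h)` for
`η(h) χ₁(h)ⁱ`, and the relation between `X` and `Y` gives `Y Xⁱ⁺¹ w = c_{i+1} Xⁱ w`: the
recursion defining `c` is exactly this relation evaluated on `Xⁱ w`. As `X^r = 1`, the vectors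
`Xⁱ w` for `i ∈ ℤ/rℤ` span a stable subspace, hence all of `V`; they are eigenvectors of `ρ(g₁)`
for the pairwise distinct eigenvalues `η(g₁) qⁱ`, hence a basis, in which `X`, `Y` and `ρ` act as
on `L(η)`.
-/

namespace Module.End

variable {ι K V : Type*} [Field K] [AddCommGroup V] [Module K V]

theorem exists_ne_zero_forall_apply_eq_smul_of_commute [IsAlgClosed K] [FiniteDimensional K V]
    (f : ι → End K V) (hf : ∀ i j, Commute (f i) (f j)) {W : Submodule K V} (hW : W ≠ ⊥)
    (hfW : ∀ i, ∀ v ∈ W, f i v ∈ W) : ∃ v ∈ W, v ≠ 0 ∧ ∀ i, ∃ c : K, f i v = c • v := by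
  let S : Set (Submodule K V) := {U | U ≤ W ∧ U ≠ ⊥ ∧ ∀ i, ∀ v ∈ U, f i v ∈ U}
  obtain ⟨U, ⟨hUW, hU, hfU⟩, hmin⟩ := wellFounded_lt.has_min S ⟨W, le_rfl, hW, hfW⟩
  obtain ⟨v, hvU, hv⟩ := Submodule.exists_mem_ne_zero_of_ne_bot hU
  refine ⟨v, hUW hvU, hv, fun i => ?_⟩
  have : Nontrivial U := Submodule.nontrivial_iff_ne_bot.mpr hU
  obtain ⟨c, hc⟩ := exists_eigenvalue ((f i).restrict (hfU i))
  -- By minimality, `U` equals its intersection with an eigenspace of `f i`.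
  have hE : U ⊓ (f i).eigenspace c ∈ S := by
    refine ⟨inf_le_left.trans hUW, fun hbot => hc ?_, fun j x hx => ⟨hfU j x hx.1, ?_⟩⟩
    · exact eigenspace_restrict_eq_bot (hfU i) (disjoint_iff.mpr (inf_comm U _ ▸ hbot))
    · exact mapsTo_genEigenspace_of_comm (hf i j) c 1 hx.2
  have hUE : U ⊓ (f i).eigenspace c = U := inf_le_left.lt_or_eq.resolve_left (hmin _ hE)
  exact ⟨c, mem_eigenspace_iff.mp (inf_eq_left.mp hUE hvU)⟩

theorem ker_ne_bot_of_pow_eq_zero [Nontrivial V] {Y : End K V} {r : ℕ} (hY : Y ^ r = 0) :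
    LinearMap.ker Y ≠ ⊥ := by
  intro h
  have hinj : Function.Injective (Y ^ r) := by
    rw [coe_pow]
    exact (LinearMap.ker_eq_bot.mp h).iterate r
  obtain ⟨v, hv⟩ := exists_ne (0 : V)
  exact hv (hinj (by rw [hY]; simp))

theorem apply_mem_ker_of_mul_eq_smul_mul {A Y : End K V} {t : K} (ht : t ≠ 0)
    (hAY : A * Y = t • (Y * A)) {v : V} (hv : v ∈ LinearMap.ker Y) : A v ∈ LinearMap.ker Y := by
  have h := LinearMap.congr_fun hAY v
  rw [mul_apply, LinearMap.mem_ker.mp hv, map_zero] at h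
  exact (smul_eq_zero.mp h.symm).resolve_left ht

theorem apply_pow_apply_of_mul_eq_smul_mul {A X : End K V} {t a : K}
    (hAX : A * X = t • (X * A)) {w : V} (hw : A w = a • w) (n : ℕ) :
    A ((X ^ n) w) = (a * t ^ n) • (X ^ n) w := by
  induction n with
  | zero => simpa using hw
  | succ n ih =>
    rw [pow_succ', mul_apply, ← mul_apply A, hAX, LinearMap.smul_apply, mul_apply, ih, map_smul,
      smul_smul]
    ring_nf

theorem pow_apply_eq_pow_val_natCast_apply {r : ℕ} {X : End K V} (hX : X ^ r = 1) (w : V)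
    (n : ℕ) : (X ^ n) w = (X ^ (n : ZMod r).val) w := by
  rw [ZMod.val_natCast, ← pow_eq_pow_mod n hX]

variable {r : ℕ} [NeZero r]

theorem apply_pow_val_apply {X : End K V} (hX : X ^ r = 1) (w : V) (i : ZMod r) :
    X ((X ^ i.val) w) = (X ^ (i + 1).val) w := by
  rw [← mul_apply, ← pow_succ', pow_apply_eq_pow_val_natCast_apply hX]
  push_cast [ZMod.natCast_zmod_val]
  rfl

theorem apply_pow_val_succ_apply {X Y : End K V} (hX : X ^ r = 1) {w : V} (hYw : Y w = 0)
    {c : ℕ → K} (hc : c 0 = 0) (hY : ∀ n : ℕ, Y ((X ^ (n + 1)) w) = c (n + 1) • (X ^ n) w)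
    (i : ZMod r) : Y ((X ^ (i + 1).val) w) = c (i + 1).val • (X ^ i.val) w := by
  cases hn : (i + 1).val with
  | zero => simp [hYw, hc]
  | succ k =>
    have hk : (k : ZMod r) = i := by
      have := congrArg (Nat.cast : ℕ → ZMod r) hn
      push_cast [ZMod.natCast_zmod_val] at this
      exact (add_right_cancel this).symm
    rw [hY, pow_apply_eq_pow_val_natCast_apply hX w k, hk]

theorem linearIndependent_of_apply_eq_mul_pow_val_smul {A : End K V} {b : ZMod r → V}
    {a q : K} (ha : a ≠ 0) (hq : IsPrimitiveRoot q r) (hb : ∀ i, b i ≠ 0)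
    (hAb : ∀ i, A (b i) = (a * q ^ i.val) • b i) : LinearIndependent K b :=
  eigenvectors_linearIndependent' A (fun i => a * q ^ i.val)
    (fun i j h => ZMod.val_injective r (hq.pow_inj (ZMod.val_lt i) (ZMod.val_lt j)
      (mul_left_cancel₀ ha h)))
    b (fun i => hasEigenvector_iff.mpr ⟨mem_eigenspace_iff.mpr (hAb i), hb i⟩)

end Module.End

theorem MonoidHom.exists_units_forall_apply_eq_smul {G K V : Type*} [Group G] [Field K]
    [AddCommGroup V] [Module K V] (ρ : G →* Module.End K V) {w : V} (hw : w ≠ 0)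
    (h : ∀ g, ∃ c : K, ρ g w = c • w) : ∃ η : G →* Kˣ, ∀ g, ρ g w = (η g : K) • w := by
  choose c hc using h
  have hinj := smul_left_injective K hw
  let η : G →* K :=
    { toFun := c
      map_one' := hinj (by simp only [← hc, map_one, Module.End.one_apply, one_smul])
      map_mul' := fun a b => hinj (show c (a * b) • w = (c a * c b) • w by
        rw [← hc, map_mul, Module.End.mul_apply, hc b, map_smul, hc a, smul_smul, mul_comm]) }
  exact ⟨η.toHomUnits, hc⟩

theorem Submodule.apply_mem_span_range {ι R M : Type*} [Semiring R] [AddCommMonoid M]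
    [Module R M] {b : ι → M} {T : M →ₗ[R] M} (h : ∀ i, T (b i) ∈ span R (Set.range b)) :
    ∀ v ∈ span R (Set.range b), T v ∈ span R (Set.range b) :=
  fun _ hv => span_le (p := (span R (Set.range b)).comap T) |>.mpr
    (Set.range_subset_iff.mpr h) hv

theorem Module.Basis.equivFun_apply_of_sum_smul {ι R M : Type*} [Fintype ι] [CommSemiring R]
    [AddCommMonoid M] [Module R M] (B : Basis ι R M) {T : M →ₗ[R] M}
    {T' : (ι → R) →ₗ[R] (ι → R)} (h : ∀ u, ∑ i, T' u i • B i = T (∑ i, u i • B i)) (v : M) :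
    B.equivFun (T v) = T' (B.equivFun v) :=
  B.equivFun.symm.injective (by
    rw [LinearEquiv.symm_apply_apply, B.equivFun_symm_apply, h, ← B.equivFun_symm_apply,
      LinearEquiv.symm_apply_apply])

theorem apply_pow_succ_eq_cseq_smul {V : Type*} [AddCommGroup V] [Module ℂ V]
    {X Y D : Module.End ℂ V} {q γ : ℂ} (hq : q ≠ 0)
    (hXY : X * Y = q⁻¹ • (Y * X) + D - 1) {w : V} (hYw : Y w = 0)
    (hD : ∀ n : ℕ, D ((X ^ n) w) = (γ * q ^ (2 * n)) • (X ^ n) w) (n : ℕ) :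
    Y ((X ^ (n + 1)) w) = cseq q 1 γ 0 (n + 1) • (X ^ n) w := by
  have hYX : Y * X = q • (X * Y) - q • D + q • 1 := by
    rw [hXY, smul_sub, smul_add, smul_smul, mul_inv_cancel₀ hq, one_smul]
    abel
  have hstep : ∀ n : ℕ, X (Y ((X ^ n) w)) = cseq q 1 γ 0 n • (X ^ n) w →
      Y ((X ^ (n + 1)) w) = cseq q 1 γ 0 (n + 1) • (X ^ n) w := by
    intro n h
    rw [pow_succ', Module.End.mul_apply, ← Module.End.mul_apply Y, hYX]
    simp only [LinearMap.add_apply, LinearMap.sub_apply, LinearMap.smul_apply,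
      Module.End.mul_apply, Module.End.one_apply, h, hD, cseq]
    match_scalars
    ring
  induction n with
  | zero => exact hstep 0 (by simp [hYw, cseq])
  | succ n ih => exact hstep (n + 1) (by rw [ih, map_smul, ← Module.End.mul_apply, ← pow_succ'])

section LModel

variable {V : Type*} [AddCommGroup V] [Module ℂ V] {r : ℕ} [NeZero r] {b : ZMod r → V}

theorem sum_wX_apply_smul {X : Module.End ℂ V} (hX : ∀ i, X (b i) = b (i + 1))
    (u : ZMod r → ℂ) : ∑ i, wX r u i • b i = X (∑ i, u i • b i) := by
  simp only [map_sum, map_smul, hX]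
  exact (Fintype.sum_equiv (Equiv.addRight 1) _ _ fun i => by simp [wX]).symm

theorem sum_wY_apply_smul {Y : Module.End ℂ V} {c : ℕ → ℂ}
    (hY : ∀ i, Y (b (i + 1)) = c (i + 1).val • b i) (u : ZMod r → ℂ) :
    ∑ i, wY r c u i • b i = Y (∑ i, u i • b i) := by
  simp only [map_sum, map_smul]
  rw [← Fintype.sum_equiv (Equiv.addRight 1) (fun i => u (i + 1) • Y (b (i + 1)))
    (fun i => u i • Y (b i)) fun _ => rfl]
  simp only [hY, smul_smul, wY, LinearMap.coe_mk, AddHom.coe_mk, mul_comm]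

theorem sum_wRho_apply_smul {Γ : Type*} [CommGroup Γ] {χ₁ η : Γ →* ℂˣ} {h : Γ}
    {T : Module.End ℂ V} (hT : ∀ i, T (b i) = ((η h : ℂ) * (χ₁ h : ℂ) ^ i.val) • b i)
    (u : ZMod r → ℂ) : ∑ i, wRho r χ₁ η h u i • b i = T (∑ i, u i • b i) := by
  simp only [map_sum, map_smul, hT, smul_smul, wRho, LinearMap.coe_mk, AddHom.coe_mk, mul_comm]

end LModel

section Irreducible

variable {Γ V : Type*} [AddCommGroup V] [Module ℂ V] {ρ : Γ → Module.End ℂ V}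
  {X Y : Module.End ℂ V}

theorem Irred2.nontrivial (hirr : Irred2 ρ X Y) : Nontrivial V :=
  let ⟨v, hv⟩ := hirr.1
  ⟨⟨v, 0, hv⟩⟩

theorem Irred2.span_range_eq_top {ι : Type*} {b : ι → V} (hirr : Irred2 ρ X Y)
    (hb : ∃ i, b i ≠ 0) (hX : ∀ i, X (b i) ∈ Submodule.span ℂ (Set.range b))
    (hY : ∀ i, Y (b i) ∈ Submodule.span ℂ (Set.range b))
    (hρ : ∀ h i, ρ h (b i) ∈ Submodule.span ℂ (Set.range b)) :
    Submodule.span ℂ (Set.range b) = ⊤ := by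
  refine (hirr.2 _ ⟨Submodule.apply_mem_span_range hX, Submodule.apply_mem_span_range hY,
    fun h => Submodule.apply_mem_span_range (hρ h)⟩).resolve_left fun hbot => ?_
  obtain ⟨i, hi⟩ := hb
  exact hi (by simpa [hbot] using Submodule.subset_span (R := ℂ) (Set.mem_range_self (f := b) i))

end Irreducible

section CaseV

variable {Γ : Type*} [CommGroup Γ] {g₁ g₂ : Γ} {χ₁ χ₂ : Γ →* ℂˣ} {Λ : Subgroup Γ}
  {ξ : ↥Λ →* ℂˣ} {r : ℕ} {V : Type*} [AddCommGroup V] [Module ℂ V]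
  {ρ : Γ → Module.End ℂ V} {X Y : Module.End ℂ V}

def IsRep.toMonoidHom (h : IsRep χ₁ χ₂ Λ ξ ρ X Y) : Γ →* Module.End ℂ V where
  toFun := ρ
  map_one' := h.2.1
  map_mul' := h.1

theorem IsRepV.neZero (hrep : IsRepV g₁ g₂ χ₁ χ₂ Λ ξ r ρ X Y) (hirr : Irred2 ρ X Y) :
    NeZero r := by
  have := hirr.nontrivial
  refine ⟨fun hr => one_ne_zero (α := Module.End ℂ V) ?_⟩
  rw [← pow_zero Y, ← hr, hrep.2.2.1]

theorem IsRepV.exists_character_eigenvector [FiniteDimensional ℂ V] [Nontrivial V]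
    (hrep : IsRepV g₁ g₂ χ₁ χ₂ Λ ξ r ρ X Y) :
    ∃ η : Γ →* ℂˣ, (∀ g : Λ, η g = ξ g) ∧
      ∃ w : V, w ≠ 0 ∧ Y w = 0 ∧ ∀ h, ρ h w = (η h : ℂ) • w := by
  obtain ⟨hR, -, hYr, -⟩ := hrep
  obtain ⟨w, hYw, hw, hρw⟩ := Module.End.exists_ne_zero_forall_apply_eq_smul_of_commute ρ
    (fun a b => by rw [Commute, SemiconjBy, ← hR.1, ← hR.1, mul_comm])
    (Module.End.ker_ne_bot_of_pow_eq_zero hYr)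
    (fun h _ => Module.End.apply_mem_ker_of_mul_eq_smul_mul (χ₂ h).ne_zero (hR.2.2.2.1 h))
  obtain ⟨η, hη⟩ : ∃ η : Γ →* ℂˣ, ∀ h, ρ h w = (η h : ℂ) • w :=
    hR.toMonoidHom.exists_units_forall_apply_eq_smul hw hρw
  refine ⟨η, fun g => Units.ext (smul_left_injective ℂ hw ?_), w, hw, hYw, hη⟩
  change (η g : ℂ) • w = (ξ g : ℂ) • w
  rw [← hη, hR.2.2.2.2 g, LinearMap.smul_apply, Module.End.one_apply]

theorem IsRepV.exists_character_basis [NeZero r] [FiniteDimensional ℂ V]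
    (hrep : IsRepV g₁ g₂ χ₁ χ₂ Λ ξ r ρ X Y) (hirr : Irred2 ρ X Y) (hg : χ₁ g₂ = χ₁ g₁)
    (hq : IsPrimitiveRoot ((χ₁ g₁ : ℂˣ) : ℂ) r) :
    ∃ η : Γ →* ℂˣ, (∀ g : Λ, η (g : Γ) = ξ g) ∧ ∃ B : Module.Basis (ZMod r) ℂ V,
      (∀ i, X (B i) = B (i + 1)) ∧
      (∀ i, Y (B (i + 1)) =
        cseq ((χ₁ g₁ : ℂˣ) : ℂ) 1 ((η (g₁ * g₂) : ℂˣ) : ℂ) 0 (i + 1).val • B i) ∧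
      ∀ h i, ρ h (B i) = ((η h : ℂ) * (χ₁ h : ℂ) ^ i.val) • B i := by
  have := hirr.nontrivial
  obtain ⟨η, hηξ, w, hw, hYw, hρw⟩ := hrep.exists_character_eigenvector
  obtain ⟨⟨-, -, hρX, -, -⟩, hXr, -, hXY⟩ := hrep
  have hρ (h : Γ) (n : ℕ) : ρ h ((X ^ n) w) = ((η h : ℂ) * (χ₁ h : ℂ) ^ n) • (X ^ n) w :=
    Module.End.apply_pow_apply_of_mul_eq_smul_mul (hρX h) (hρw h) n
  have hY := apply_pow_succ_eq_cseq_smul (Units.ne_zero _) hXY hYw (γ := η (g₁ * g₂)) fun n => by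
    rw [hρ, map_mul χ₁, hg, Units.val_mul, ← sq, ← pow_mul, mul_comm 2]
  let b : ZMod r → V := fun i => (X ^ i.val) w
  have hXb : ∀ i, X (b i) = b (i + 1) := Module.End.apply_pow_val_apply hXr w
  have hYb : ∀ i, Y (b (i + 1)) = _ • b i := Module.End.apply_pow_val_succ_apply hXr hYw rfl hY
  have hb : ∀ i, b i ≠ 0 := fun i hi =>
    hw ((Module.End.isUnit_iff _).mp ((IsUnit.of_pow_eq_one hXr (NeZero.ne r)).pow i.val)
      |>.injective (hi.trans (map_zero _).symm))
  have hli := Module.End.linearIndependent_of_apply_eq_mul_pow_val_smul (η g₁).ne_zero hq hb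
    fun i => hρ g₁ i.val
  have hspan : Submodule.span ℂ (Set.range b) = ⊤ := hirr.span_range_eq_top ⟨0, hb 0⟩
    (fun i => hXb i ▸ Submodule.subset_span ⟨i + 1, rfl⟩)
    (fun i => sub_add_cancel i 1 ▸ hYb (i - 1) ▸
      Submodule.smul_mem _ _ (Submodule.subset_span ⟨i - 1, rfl⟩))
    (fun h i => hρ h i.val ▸ Submodule.smul_mem _ _ (Submodule.subset_span ⟨i, rfl⟩))
  refine ⟨η, hηξ, Module.Basis.mk hli hspan.ge, ?_, ?_, ?_⟩ <;> simp only [Module.Basis.mk_apply]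
  exacts [hXb, hYb, fun h i => hρ h i.val]

end CaseV

theorem caseV_classification_general {Γ : Type*} [CommGroup Γ] (g₁ g₂ : Γ)
    (χ₁ χ₂ : Γ →* ℂˣ) (hχ₂ : χ₂ = χ₁⁻¹) (h12 : χ₁ g₂ * χ₂ g₁ = 1)
    (r : ℕ)
    (hq : IsPrimitiveRoot ((χ₁ g₁ : ℂˣ) : ℂ) r)
    (Λ : Subgroup Γ) (ξ : ↥Λ →* ℂˣ)
    (V : Type*) [AddCommGroup V] [Module ℂ V] [FiniteDimensional ℂ V]
    (ρ : Γ → Module.End ℂ V) (X Y : Module.End ℂ V)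
    (hrep : IsRepV g₁ g₂ χ₁ χ₂ Λ ξ r ρ X Y) (hirr : Irred2 ρ X Y) :
    ∃ η : Γ →* ℂˣ, (∀ g : Λ, η (g : Γ) = ξ g) ∧
      ∃ φ : V ≃ₗ[ℂ] (ZMod r → ℂ),
        (∀ v : V, φ (X v) = wX r (φ v)) ∧
        (∀ v : V, φ (Y v) =
          wY r (cseq ((χ₁ g₁ : ℂˣ) : ℂ) 1 ((η (g₁ * g₂) : ℂˣ) : ℂ) 0) (φ v)) ∧
        ∀ (h : Γ) (v : V), φ (ρ h v) = wRho r χ₁ η h (φ v) := by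
  have := hrep.neZero hirr
  have hg : χ₁ g₂ = χ₁ g₁ := by
    rw [hχ₂, MonoidHom.inv_apply, mul_inv_eq_one] at h12
    exact h12
  obtain ⟨η, hηξ, B, hBX, hBY, hBρ⟩ := hrep.exists_character_basis hirr hg hq
  exact ⟨η, hηξ, B.equivFun, B.equivFun_apply_of_sum_smul (sum_wX_apply_smul hBX),
    B.equivFun_apply_of_sum_smul (sum_wY_apply_smul hBY),
    fun h => B.equivFun_apply_of_sum_smul (sum_wRho_apply_smul (hBρ h))⟩

/-- Case (V), classification: every irreducible case-V representation `(V, ρ, X, Y)` is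
isomorphic, via a linear isomorphism intertwining `X`, `Y` and every `ρ(h)`, to `L(η)`
for some character `η` of `Γ` with `η|_Λ = ξ`. -/
theorem caseV_classification {Γ : Type*} [CommGroup Γ] [Fintype Γ] (g₁ g₂ : Γ)
    (χ₁ χ₂ : Γ →* ℂˣ) (hχ₂ : χ₂ = χ₁⁻¹) (h12 : χ₁ g₂ * χ₂ g₁ = 1)
    (r : ℕ) (hr : 1 < r) (hord : orderOf χ₁ = r)
    (hq : IsPrimitiveRoot ((χ₁ g₁ : ℂˣ) : ℂ) r)
    (Λ : Subgroup Γ) (hΛ : ∀ g : Γ, g ∈ Λ ↔ (χ₁ g = 1 ∧ χ₂ g = 1)) (ξ : ↥Λ →* ℂˣ)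
    (V : Type*) [AddCommGroup V] [Module ℂ V] [FiniteDimensional ℂ V]
    (ρ : Γ → Module.End ℂ V) (X Y : Module.End ℂ V)
    (hrep : IsRepV g₁ g₂ χ₁ χ₂ Λ ξ r ρ X Y) (hirr : Irred2 ρ X Y) :
    ∃ η : Γ →* ℂˣ, (∀ g : Λ, η (g : Γ) = ξ g) ∧
      ∃ φ : V ≃ₗ[ℂ] (ZMod r → ℂ),
        (∀ v : V, φ (X v) = wX r (φ v)) ∧
        (∀ v : V, φ (Y v) =
          wY r (cseq ((χ₁ g₁ : ℂˣ) : ℂ) 1 ((η (g₁ * g₂) : ℂˣ) : ℂ) 0) (φ v)) ∧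
        ∀ (h : Γ) (v : V), φ (ρ h v) = wRho r χ₁ η h (φ v) :=
  caseV_classification_general g₁ g₂ χ₁ χ₂ hχ₂ h12 r hq Λ ξ V ρ X Y hrep hirr
end
end

section
/- Case (V), uniqueness: If η, η' are characters of Γ with η|_Λ = η'|_Λ = ξ and the case-V representations L(η) and L(η') are isomorphic (via a linear isomorphism intertwining X, Y and every ρ(h)), then η = η'·χ₁^m for some integer m. -/
noncomputable section

/- The basis vector `f₀` of `L(η)` is a common eigenvector of all `ρ(h)`, with eigenvalues `η(h)`.
An isomorphism `L(η) ≅ L(η')` intertwining the `ρ(h)` carries it to a nonzero common eigenvector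
of `L(η')` with the same eigenvalues. But `ρ` acts diagonally on `L(η')` with weights `η'·χ₁^i`,
so any nonzero coordinate `i` of that eigenvector gives `η = η'·χ₁^i`. -/

section Weights

variable {Γ : Type*} [CommGroup Γ] (r : ℕ) (χ₁ η : Γ →* ℂˣ)

@[simp]
theorem wRho_apply (h : Γ) (v : ZMod r → ℂ) (i : ZMod r) :
    wRho r χ₁ η h v i = (η h : ℂ) * (χ₁ h : ℂ) ^ i.val * v i := rfl

theorem wRho_single (h : Γ) (i : ZMod r) (c : ℂ) :
    wRho r χ₁ η h (Pi.single i c) = ((η h : ℂ) * (χ₁ h : ℂ) ^ i.val) • Pi.single i c := by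
  ext j
  rcases eq_or_ne j i with rfl | hj
  · simp
  · simp [hj]

theorem exists_weight_of_wRho_eigenvector {v : ZMod r → ℂ} (hv : v ≠ 0) {μ : Γ → ℂ}
    (hμ : ∀ h, wRho r χ₁ η h v = μ h • v) :
    ∃ i : ZMod r, ∀ h, μ h = (η h : ℂ) * (χ₁ h : ℂ) ^ i.val := by
  obtain ⟨i, hi⟩ := Function.ne_iff.mp hv
  refine ⟨i, fun h => mul_right_cancel₀ hi ?_⟩
  simpa using (congrFun (hμ h) i).symm

end Weights

theorem caseV_uniqueness_general {Γ : Type*} [CommGroup Γ] (χ₁ : Γ →* ℂˣ) (r : ℕ) (η η' : Γ →* ℂˣ)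
    (φ : (ZMod r → ℂ) ≃ₗ[ℂ] (ZMod r → ℂ))
    (hφρ : ∀ (h : Γ) (v : ZMod r → ℂ), φ (wRho r χ₁ η h v) = wRho r χ₁ η' h (φ v)) :
    ∃ m : ℤ, η = η' * χ₁ ^ m := by
  set f₀ : ZMod r → ℂ := Pi.single 0 1
  have hf₀ : φ f₀ ≠ 0 := by simp [f₀]
  have heig : ∀ h, wRho r χ₁ η' h (φ f₀) = (η h : ℂ) • φ f₀ := fun h => by
    rw [← hφρ, wRho_single, ZMod.val_zero, pow_zero, mul_one, map_smul]
  obtain ⟨i, hi⟩ := exists_weight_of_wRho_eigenvector r χ₁ η' hf₀ heig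
  refine ⟨i.val, MonoidHom.ext fun h => Units.ext ?_⟩
  simpa using hi h

/-- Case (V), uniqueness: if `η, η'` are characters of `Γ` restricting to `ξ` on `Λ` and
the case-V representations `L(η)` and `L(η')` are isomorphic via a linear isomorphism
intertwining `X`, `Y` and every `ρ(h)`, then `η = η'·χ₁^m` for some integer `m`. -/
theorem caseV_uniqueness {Γ : Type*} [CommGroup Γ] [Fintype Γ] (g₁ g₂ : Γ)
    (χ₁ χ₂ : Γ →* ℂˣ) (hχ₂ : χ₂ = χ₁⁻¹) (h12 : χ₁ g₂ * χ₂ g₁ = 1)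
    (r : ℕ) (hr : 1 < r) (hord : orderOf χ₁ = r)
    (hq : IsPrimitiveRoot ((χ₁ g₁ : ℂˣ) : ℂ) r)
    (Λ : Subgroup Γ) (hΛ : ∀ g : Γ, g ∈ Λ ↔ (χ₁ g = 1 ∧ χ₂ g = 1)) (ξ : ↥Λ →* ℂˣ)
    (η η' : Γ →* ℂˣ) (hη : ∀ g : Λ, η (g : Γ) = ξ g) (hη' : ∀ g : Λ, η' (g : Γ) = ξ g)
    (φ : (ZMod r → ℂ) ≃ₗ[ℂ] (ZMod r → ℂ))
    (hφX : ∀ v : ZMod r → ℂ, φ (wX r v) = wX r (φ v))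
    (hφY : ∀ v : ZMod r → ℂ,
      φ (wY r (cseq ((χ₁ g₁ : ℂˣ) : ℂ) 1 ((η (g₁ * g₂) : ℂˣ) : ℂ) 0) v) =
        wY r (cseq ((χ₁ g₁ : ℂˣ) : ℂ) 1 ((η' (g₁ * g₂) : ℂˣ) : ℂ) 0) (φ v))
    (hφρ : ∀ (h : Γ) (v : ZMod r → ℂ), φ (wRho r χ₁ η h v) = wRho r χ₁ η' h (φ v)) :
    ∃ m : ℤ, η = η' * χ₁ ^ m :=
  caseV_uniqueness_general χ₁ r η η' φ hφρ
end
end
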